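/- Let u > 1, φ(t) = 1 - e^t + e^{2t} + e^{3t}, let A be a finite set of non-negative real numbers with positive weights λ_α summing to 1, let β = ∑ λ_α α, let c_α > 0 for α ∈ A and c_β ∈ ℝ. Then ∑_{α∈A} c_α φ(α ln u) + c_β φ(β ln u) ≥ (Θ + c_β) φ(β ln u), where Θ = ∏_{α∈A} (c_α/λ_α)^{λ_α}. -/

import Mathlib

/-!
`log φ` is convex on `[0, ∞)`: with `x = eᵗ ≥ 1` one has
`φ'' φ - φ'² = x (x² ((x - 2)² + 4) + 4x - 1) ≥ 0`.
Put `L = log u > 0`. Since all `α L ≥ 0`, Jensen for `log φ` gives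
`φ(β L) ≤ ∏ φ(α L) ^ λ_α`. Weighted AM–GM applied to the numbers `(c_α / λ_α) φ(α L)` then gives
`Θ ∏ φ(α L) ^ λ_α ≤ ∑ c_α φ(α L)`, and adding `c_β φ(β L)` to both sides finishes the proof.
-/

open Real Finset

lemma convexOn_log_of_sq_deriv_le {s : Set ℝ} (hs : Convex ℝ s) {f f' f'' : ℝ → ℝ}
    (hf : ∀ x ∈ s, HasDerivAt f (f' x) x) (hf' : ∀ x ∈ interior s, HasDerivAt f' (f'' x) x)
    (hpos : ∀ x ∈ s, 0 < f x) (hsq : ∀ x ∈ interior s, f' x ^ 2 ≤ f'' x * f x) :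
    ConvexOn ℝ s fun x => log (f x) := by
  have hs_int {x} (hx : x ∈ interior s) : x ∈ s := interior_subset hx
  refine convexOn_of_hasDerivWithinAt2_nonneg (f' := fun x => f' x / f x)
    (f'' := fun x => (f'' x * f x - f' x * f' x) / f x ^ 2) hs
    (fun x hx => ((hf x hx).log (hpos x hx).ne').continuousAt.continuousWithinAt)
    (fun x hx => ((hf x (hs_int hx)).log (hpos x (hs_int hx)).ne').hasDerivWithinAt)
    (fun x hx => ((hf' x hx).div (hf x (hs_int hx)) (hpos x (hs_int hx)).ne').hasDerivWithinAt)
    fun x hx => div_nonneg (by nlinarith [hsq x hx]) (sq_nonneg _)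

lemma le_prod_rpow_of_convexOn_log {ι : Type*} {s : Set ℝ} {f : ℝ → ℝ}
    (hlog : ConvexOn ℝ s fun x => log (f x)) (hpos : ∀ x ∈ s, 0 < f x)
    {t : Finset ι} {w p : ι → ℝ} (hw : ∀ i ∈ t, 0 ≤ w i) (hw₁ : ∑ i ∈ t, w i = 1)
    (hp : ∀ i ∈ t, p i ∈ s) :
    f (∑ i ∈ t, w i * p i) ≤ ∏ i ∈ t, f (p i) ^ w i := by
  have hmem : ∑ i ∈ t, w i * p i ∈ s := hlog.1.sum_mem hw hw₁ hp
  rw [← exp_log (hpos _ hmem)]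
  calc exp (log (f (∑ i ∈ t, w i * p i)))
      ≤ exp (∑ i ∈ t, w i * log (f (p i))) := exp_le_exp.2 (hlog.map_sum_le hw hw₁ hp)
    _ = ∏ i ∈ t, f (p i) ^ w i := by
      rw [exp_sum]
      exact prod_congr rfl fun i hi => by rw [rpow_def_of_pos (hpos _ (hp i hi)), mul_comm]

lemma prod_div_rpow_mul_prod_rpow_le_sum {ι : Type*} {t : Finset ι} {w c x : ι → ℝ}
    (hw : ∀ i ∈ t, 0 < w i) (hw₁ : ∑ i ∈ t, w i = 1) (hc : ∀ i ∈ t, 0 ≤ c i)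
    (hx : ∀ i ∈ t, 0 ≤ x i) :
    (∏ i ∈ t, (c i / w i) ^ w i) * ∏ i ∈ t, x i ^ w i ≤ ∑ i ∈ t, c i * x i := by
  have hcw (i) (hi : i ∈ t) : 0 ≤ c i / w i := div_nonneg (hc i hi) (hw i hi).le
  calc (∏ i ∈ t, (c i / w i) ^ w i) * ∏ i ∈ t, x i ^ w i
      = ∏ i ∈ t, (c i / w i * x i) ^ w i := by
        rw [← prod_mul_distrib]
        exact prod_congr rfl fun i hi => (mul_rpow (hcw i hi) (hx i hi)).symm
    _ ≤ ∑ i ∈ t, w i * (c i / w i * x i) :=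
        geom_mean_le_arith_mean_weighted t w _ (fun i hi => (hw i hi).le) hw₁
          fun i hi => mul_nonneg (hcw i hi) (hx i hi)
    _ = ∑ i ∈ t, c i * x i := sum_congr rfl fun i hi => by field_simp [(hw i hi).ne']

noncomputable def phi (t : ℝ) : ℝ := 1 - exp t + exp (2 * t) + exp (3 * t)

noncomputable def phi' (t : ℝ) : ℝ := -exp t + 2 * exp (2 * t) + 3 * exp (3 * t)

noncomputable def phi'' (t : ℝ) : ℝ := -exp t + 4 * exp (2 * t) + 9 * exp (3 * t)

lemma hasDerivAt_exp_const_mul (k t : ℝ) :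
    HasDerivAt (fun s => exp (k * s)) (k * exp (k * t)) t := by
  simpa [mul_comm] using ((hasDerivAt_id t).const_mul k).exp

lemma hasDerivAt_phi (t : ℝ) : HasDerivAt phi (phi' t) t := by
  unfold phi phi'
  exact ((((hasDerivAt_const t 1).sub (hasDerivAt_exp t)).add
    (hasDerivAt_exp_const_mul 2 t)).add (hasDerivAt_exp_const_mul 3 t)).congr_deriv (by ring)

lemma hasDerivAt_phi' (t : ℝ) : HasDerivAt phi' (phi'' t) t := by
  unfold phi' phi''
  exact (((hasDerivAt_exp t).neg.add ((hasDerivAt_exp_const_mul 2 t).const_mul 2)).add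
    ((hasDerivAt_exp_const_mul 3 t).const_mul 3)).congr_deriv (by ring)

lemma phi_pos (t : ℝ) : 0 < phi t := by
  have h2 : exp (2 * t) = exp t ^ 2 := by rw [← exp_nat_mul]; norm_num
  have := exp_pos (3 * t)
  rw [phi, h2]
  nlinarith [sq_nonneg (exp t - 1 / 2)]

lemma phi'_sq_le (t : ℝ) (ht : 0 ≤ t) : phi' t ^ 2 ≤ phi'' t * phi t := by
  set x := exp t
  have hx : 1 ≤ x := one_le_exp ht
  have h2 : exp (2 * t) = x ^ 2 := by rw [← exp_nat_mul]; norm_num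
  have h3 : exp (3 * t) = x ^ 3 := by rw [← exp_nat_mul]; norm_num
  have key : phi'' t * phi t - phi' t ^ 2 = x * (x ^ 2 * ((x - 2) ^ 2 + 4) + 4 * x - 1) := by
    simp only [phi, phi', phi'', h2, h3]
    ring
  have hx2 : 0 ≤ x ^ 2 * ((x - 2) ^ 2 + 4) := by positivity
  nlinarith

lemma convexOn_log_phi : ConvexOn ℝ (Set.Ici 0) fun t => log (phi t) :=
  convexOn_log_of_sq_deriv_le (convex_Ici 0) (fun t _ => hasDerivAt_phi t)
    (fun t _ => hasDerivAt_phi' t) (fun t _ => phi_pos t)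
    fun t ht => phi'_sq_le t (interior_subset ht)

theorem stmt_9 {ι : Type*} (u : ℝ) (hu : 1 < u)
    (φ : ℝ → ℝ)
    (hφ : φ = fun t : ℝ => 1 - Real.exp t + Real.exp (2*t) + Real.exp (3*t))
    (A : Finset ι) (a : ι → ℝ) (ha : ∀ α ∈ A, 0 ≤ a α)
    (lam : ι → ℝ) (hlam : ∀ α ∈ A, 0 < lam α) (hsum : ∑ α ∈ A, lam α = 1)
    (β : ℝ) (hβ : β = ∑ α ∈ A, lam α * a α)
    (c : ι → ℝ) (hc : ∀ α ∈ A, 0 < c α) (cβ : ℝ)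
    (Θ : ℝ) (hΘ : Θ = ∏ α ∈ A, (c α / lam α) ^ lam α) :
    (Θ + cβ) * φ (β * Real.log u)
      ≤ ∑ α ∈ A, c α * φ (a α * Real.log u) + cβ * φ (β * Real.log u) := by
  obtain rfl : φ = phi := hφ
  set L := log u
  have hL : 0 ≤ L := (log_pos hu).le
  have hβL : β * L = ∑ α ∈ A, lam α * (a α * L) := by
    rw [hβ, sum_mul]
    exact sum_congr rfl fun α _ => mul_assoc _ _ _
  have jensen : phi (β * L) ≤ ∏ α ∈ A, phi (a α * L) ^ lam α := hβL ▸
    le_prod_rpow_of_convexOn_log convexOn_log_phi (fun t _ => phi_pos t)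
      (fun α hα => (hlam α hα).le) hsum fun α hα => mul_nonneg (ha α hα) hL
  have amgm : Θ * ∏ α ∈ A, phi (a α * L) ^ lam α ≤ ∑ α ∈ A, c α * phi (a α * L) := hΘ ▸
    prod_div_rpow_mul_prod_rpow_le_sum hlam hsum (fun α hα => (hc α hα).le)
      fun α _ => (phi_pos _).le
  have hΘ₀ : 0 ≤ Θ := hΘ ▸ prod_nonneg fun α hα =>
    rpow_nonneg (div_nonneg (hc α hα).le (hlam α hα).le) _
  linarith [mul_le_mul_of_nonneg_left jensen hΘ₀]
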